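/- The complement of a perfect matching on 6 vertices, co-(3K_2) (equivalently, K_{2,2,2}, the octahedron graph), has linear rank-width exactly 2. -/
import Mathlib


open scoped Classical

variable {V : Type*} [Fintype V] [DecidableEq V]

/-- GF(2)-rank of the adjacency submatrix `A_G[X, V \ X]`. -/
noncomputable def cutrk (G : SimpleGraph V) (X : Finset V) : ℕ :=
  (Matrix.of fun (a : X) (b : (Xᶜ : Finset V)) =>
    if G.Adj a.1 b.1 then (1 : ZMod 2) else 0).rank

/-- The cutrank of a linear ordering of the vertices. -/
noncomputable def ordCutrk (G : SimpleGraph V) (e : Fin (Fintype.card V) ≃ V) : ℕ :=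
  Finset.univ.sup fun i : Fin (Fintype.card V) => cutrk G ((Finset.Iic i).image e)

/-- Linear rank-width: minimum cutrank over all linear orderings of the vertices. -/
noncomputable def lrw (G : SimpleGraph V) : ℕ :=
  ⨅ e : Fin (Fintype.card V) ≃ V, ordCutrk G e

/-- `co-(3K₂)`: the complement of a perfect matching on 6 vertices
(the octahedron `K_{2,2,2}`). -/
def coThreeKTwo : SimpleGraph (Fin 6) :=
  (SimpleGraph.fromRel fun a b =>
    (a = 0 ∧ b = 1) ∨ (a = 2 ∧ b = 3) ∨ (a = 4 ∧ b = 5))ᶜ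

def adjB (a b : Fin 6) : Bool :=
  a != b && !((a == 0 && b == 1) || (a == 2 && b == 3) || (a == 4 && b == 5) ||
    (b == 0 && a == 1) || (b == 2 && a == 3) || (b == 4 && a == 5))

lemma adj_iff' (a b : Fin 6) : coThreeKTwo.Adj a b ↔
    (a ≠ b ∧ ¬((a = 0 ∧ b = 1) ∨ (a = 2 ∧ b = 3) ∨ (a = 4 ∧ b = 5) ∨
      (b = 0 ∧ a = 1) ∨ (b = 2 ∧ a = 3) ∨ (b = 4 ∧ a = 5))) := by
  simp [coThreeKTwo, SimpleGraph.fromRel_adj, SimpleGraph.compl_adj]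
  tauto

lemma adj_iff (a b : Fin 6) : coThreeKTwo.Adj a b ↔ adjB a b = true := by
  rw [adj_iff']
  revert a b
  decide

lemma entry_eq (a b : Fin 6) :
    (if coThreeKTwo.Adj a b then (1 : ZMod 2) else 0) = (if adjB a b then 1 else 0) := by
  by_cases h : coThreeKTwo.Adj a b
  · rw [if_pos h, if_pos ((adj_iff a b).mp h)]
  · rw [if_neg h, if_neg (fun hb => h ((adj_iff a b).mpr hb))]

open Matrix in
lemma two_le_rank {m n : Type*} [Fintype m] [Fintype n] [DecidableEq n]
    (M : Matrix m n (ZMod 2)) (i1 i2 : m) (j1 j2 : n)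
    (h : M i1 j1 * M i2 j2 + M i1 j2 * M i2 j1 = 1) : 2 ≤ M.rank := by
  rw [← M.rank_transpose]
  have hmem : ∀ i : m, M i ∈ LinearMap.range Mᵀ.mulVecLin := by
    intro i
    refine ⟨Pi.single i 1, ?_⟩
    ext j
    simp [Matrix.mulVecLin_apply, Matrix.mulVec_single]
  have key : ∀ a b c d s t : ZMod 2, a * d + b * c = 1 →
      s * a + t * c = 0 → s * b + t * d = 0 → s = 0 ∧ t = 0 := by decide
  have hli : LinearIndependent (ZMod 2) ![M i1, M i2] := by
    rw [LinearIndependent.pair_iff]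
    intro s t hst
    have h1 := congrFun hst j1
    have h2 := congrFun hst j2
    simp [Pi.add_apply, Pi.smul_apply, smul_eq_mul] at h1 h2
    exact key _ _ _ _ s t h h1 h2
  have hspan : Submodule.span (ZMod 2) (Set.range ![M i1, M i2]) ≤
      LinearMap.range Mᵀ.mulVecLin := by
    rw [Submodule.span_le]
    rintro x ⟨k, rfl⟩
    fin_cases k <;> simpa using hmem _
  have h2 : Module.finrank (ZMod 2)
      (Submodule.span (ZMod 2) (Set.range ![M i1, M i2])) = 2 := by
    rw [finrank_span_eq_card hli]
    simp
  calc (2 : ℕ) = _ := h2.symm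
    _ ≤ _ := Submodule.finrank_mono hspan

open Matrix in
lemma rank_le_two {m n : Type*} [Fintype m] [Fintype n]
    (M : Matrix m n (ZMod 2)) (p q : n → ZMod 2) (h : ∀ i, M i = p ∨ M i = q) :
    M.rank ≤ 2 := by
  classical
  have hM : M = (Matrix.of fun i (j : Fin 2) =>
        if M i = p then (if j = 0 then (1 : ZMod 2) else 0) else (if j = 1 then 1 else 0)) *
      (Matrix.of ![p, q]) := by
    ext i j
    rw [Matrix.mul_apply, Fin.sum_univ_two]
    rcases h i with hi | hi
    · simp [hi]
    · by_cases hpq : M i = p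
      · simp only [Matrix.of_apply, Matrix.cons_val_zero, Matrix.cons_val_one, Matrix.head_cons,
          if_pos hpq]
        rw [← hpq]
        norm_num
      · simp only [Matrix.of_apply, Matrix.cons_val_zero, Matrix.cons_val_one, Matrix.head_cons,
          if_neg hpq]
        rw [hi]
        norm_num
  calc M.rank ≤ (Matrix.of ![p, q]).rank := by rw [hM]; exact Matrix.rank_mul_le_right _ _
    _ ≤ Fintype.card (Fin 2) := Matrix.rank_le_card_height _
    _ = 2 := by simp

lemma cutrk_le_left (G : SimpleGraph V) (X : Finset V) : cutrk G X ≤ X.card :=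
  (Matrix.rank_le_card_height _).trans_eq (Fintype.card_coe X)

lemma cutrk_le_right (G : SimpleGraph V) (X : Finset V) : cutrk G X ≤ Xᶜ.card :=
  (Matrix.rank_le_card_width _).trans_eq (Fintype.card_coe Xᶜ)

def e0 : Fin (Fintype.card (Fin 6)) ≃ Fin 6 := finCongr (Fintype.card_fin 6)

def i2 : Fin (Fintype.card (Fin 6)) := ⟨2, by simp⟩

theorem stmt12 : lrw coThreeKTwo = 2 := by
  refine le_antisymm ?_ ?_
  · -- upper bound via the identity ordering
    refine le_trans (ciInf_le (OrderBot.bddBelow _) e0) ?_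
    rw [ordCutrk]
    apply Finset.sup_le
    intro i _
    by_cases hi2 : i = i2
    · -- the middle cut {0,1,2}
      subst hi2
      have hX : (Finset.Iic i2).image e0 = ({0, 1, 2} : Finset (Fin 6)) := by decide
      rw [hX]
      refine rank_le_two _ (fun _ => 1) (fun b => if (b : Fin 6) = 3 then 0 else 1) ?_
      have key1 : ∀ b : Fin 6, b ∈ ({0, 1, 2} : Finset (Fin 6))ᶜ →
          ((if adjB 0 b then (1 : ZMod 2) else 0) = 1 ∧
           (if adjB 1 b then (1 : ZMod 2) else 0) = 1 ∧
           (if adjB 2 b then (1 : ZMod 2) else 0) = (if b = 3 then 0 else 1)) := by decide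
      rintro ⟨a, ha⟩
      fin_cases ha
      · left; funext b; obtain ⟨b, hb⟩ := b
        simp only [Matrix.of_apply]; rw [entry_eq]
        exact (key1 b hb).1
      · left; funext b; obtain ⟨b, hb⟩ := b
        simp only [Matrix.of_apply]; rw [entry_eq]
        exact (key1 b hb).2.1
      · right; funext b; obtain ⟨b, hb⟩ := b
        simp only [Matrix.of_apply]; rw [entry_eq]
        exact (key1 b hb).2.2
    · have hcards : ∀ j : Fin (Fintype.card (Fin 6)), j ≠ i2 →
          ((Finset.Iic j).image e0).card ≤ 2 ∨ (((Finset.Iic j).image e0)ᶜ).card ≤ 2 := by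
        decide
      rcases hcards i hi2 with h | h
      · exact (cutrk_le_left _ _).trans h
      · exact (cutrk_le_right _ _).trans h
  · -- lower bound
    haveI : Nonempty (Fin (Fintype.card (Fin 6)) ≃ Fin 6) := ⟨e0⟩
    apply le_ciInf
    intro e
    refine le_trans ?_ (Finset.le_sup (f := fun i => cutrk coThreeKTwo ((Finset.Iic i).image e))
      (Finset.mem_univ i2))
    set X := (Finset.Iic i2).image e with hXdef
    have hcard : X.card = 3 := by
      rw [hXdef, Finset.card_image_of_injective _ e.injective]
      decide
    have W : ∀ Y : Finset (Fin 6), Y.card = 3 →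
        ∃ a1, a1 ∈ Y ∧ ∃ a2, a2 ∈ Y ∧ ∃ b1, b1 ∈ Yᶜ ∧ ∃ b2, b2 ∈ Yᶜ ∧
          ((adjB a1 b1 && adjB a2 b2) ≠ (adjB a1 b2 && adjB a2 b1)) := by decide
    obtain ⟨a1, ha1, a2, ha2, b1, hb1, b2, hb2, hdet⟩ := W X hcard
    refine two_le_rank _ ⟨a1, ha1⟩ ⟨a2, ha2⟩ ⟨b1, hb1⟩ ⟨b2, hb2⟩ ?_
    simp only [Matrix.of_apply]
    rw [entry_eq, entry_eq, entry_eq, entry_eq]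
    have boolkey : ∀ x y z w : Bool, ((x && y) ≠ (z && w)) →
        (((if x then (1 : ZMod 2) else 0) * if y then 1 else 0) +
          (if z then 1 else 0) * if w then 1 else 0) = 1 := by decide
    exact boolkey _ _ _ _ hdet
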